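/- Every natural transformation α : Δ^• → Δ^• of the standard cosimplicial space is of the form α_k(t₁,...,t_k) = (φ(t₁),...,φ(t_k)) for a unique weakly monotone map φ : [−1,1] → [−1,1] fixing the endpoints; in particular Tot Δ^• is determined by its component in cosimplicial degree 1, and φ = α₁. -/
import Mathlib


/-- The coface map `dⁱ : Δ^k → Δ^{k+1}` (1-indexed, `0 ≤ i ≤ k+1`) on raw tuples. -/
def dmap (k : ℕ) (i : ℕ) (t : Fin k → ℝ) : Fin (k + 1) → ℝ := fun j =>
  if (j : ℕ) + 1 ≤ i then (if h : (j : ℕ) < k then t ⟨j, h⟩ else 1)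
  else if h : 1 ≤ (j : ℕ) then t ⟨(j : ℕ) - 1, by omega⟩ else -1

/-- The codegeneracy map `s^j : Δ^{k+1} → Δ^k` (1-indexed, `1 ≤ j ≤ k+1`). -/
def smap (k : ℕ) (j : ℕ) (t : Fin (k + 1) → ℝ) : Fin k → ℝ := fun l =>
  if (l : ℕ) + 1 < j then t ⟨l, by omega⟩ else t ⟨(l : ℕ) + 1, by omega⟩

/-- The simplex `Δ^k` of weakly increasing `k`-tuples in `[−1,1]`. -/
abbrev Simplex (k : ℕ) := {t : Fin k → ℝ // Monotone t ∧ ∀ i, t i ∈ Set.Icc (-1 : ℝ) 1}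

/-- Naturality: the family `α` commutes with all cofaces and codegeneracies. -/
def IsNatural (α : ∀ k, C(Simplex k, Simplex k)) : Prop :=
  (∀ k i, i ≤ k + 1 → ∀ (u : Simplex k) (v : Simplex (k + 1)),
      v.1 = dmap k i u.1 → (α (k + 1) v).1 = dmap k i (α k u).1) ∧
  (∀ k j, 1 ≤ j → j ≤ k + 1 → ∀ (v : Simplex (k + 1)) (u : Simplex k),
      u.1 = smap k j v.1 → (α k u).1 = smap k j (α (k + 1) v).1)

/-- `Tot Δ^• = Nat(Δ^•, Δ^•)`: families of continuous maps `Δ^k → Δ^k` commuting with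
cofaces and codegeneracies, with the compact-open topology. -/
abbrev TotDelta := {α : ∀ k, C(Simplex k, Simplex k) // IsNatural α}

/-- `Mon(I, ∂I)`: continuous weakly monotone self-maps of `[−1,1]` fixing the
endpoints, with the compact-open topology. -/
abbrev MonI := {φ : C(Set.Icc (-1 : ℝ) 1, Set.Icc (-1 : ℝ) 1) //
  Monotone (fun x => φ x) ∧ φ ⟨-1, by norm_num⟩ = ⟨-1, by norm_num⟩ ∧
  φ ⟨1, by norm_num⟩ = ⟨1, by norm_num⟩}

-- aux lemmas
lemma smap_mono {k j : ℕ} {t : Fin (k+1) → ℝ} (ht : Monotone t) : Monotone (smap k j t) := by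
  intro l l' h
  have h' : (l : ℕ) ≤ (l' : ℕ) := h
  unfold smap
  split_ifs <;> · apply ht; rw [Fin.mk_le_mk]; omega

lemma smap_mem {k j : ℕ} {t : Fin (k+1) → ℝ} (ht : ∀ i, t i ∈ Set.Icc (-1:ℝ) 1) :
    ∀ l, smap k j t l ∈ Set.Icc (-1:ℝ) 1 := by
  intro l; unfold smap; split_ifs <;> exact ht _

noncomputable def psi (α : TotDelta) (x : Set.Icc (-1:ℝ) 1) : ℝ :=
  ((α.1 1) ⟨fun _ => (x:ℝ), monotone_const, fun _ => x.2⟩).1 0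

lemma coord_formula (α : TotDelta) :
    ∀ (k : ℕ) (t : Simplex k) (i : Fin k),
      ((α.1 k) t).1 i = psi α ⟨t.1 i, t.2.2 i⟩ := by
  intro k
  induction k with
  | zero => intro t i; exact i.elim0
  | succ n ih =>
    match n, ih with
    | 0, _ =>
      intro t i
      have hi : i = 0 := Fin.fin_one_eq_zero i
      subst hi
      have ht : (⟨fun _ => ((⟨t.1 0, t.2.2 0⟩ : Set.Icc (-1:ℝ) 1) : ℝ), monotone_const,
          fun _ => (⟨t.1 0, t.2.2 0⟩ : Set.Icc (-1:ℝ) 1).2⟩ : Simplex 1) = t := by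
        apply Subtype.ext; funext j
        have : j = 0 := Fin.fin_one_eq_zero j
        simp [this]
      show _ = ((α.1 1) _).1 0
      rw [ht]
    | (m+1), ih =>
      intro t i
      by_cases hi : (i : ℕ) < m + 1
      · set u : Simplex (m+1) := ⟨smap (m+1) (m+2) t.1, smap_mono t.2.1, smap_mem t.2.2⟩ with hu
        have hnat := α.2.2 (m+1) (m+2) (by omega) (by omega) t u rfl
        have h1 := ih u ⟨i, hi⟩
        have e1 : u.1 ⟨(i:ℕ), hi⟩ = t.1 i := by
          simp only [hu, smap]
          rw [if_pos (by omega)]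
        have e2 : ((α.1 (m+1)) u).1 ⟨(i:ℕ), hi⟩ = ((α.1 (m+2)) t).1 i := by
          rw [hnat]
          simp only [smap]
          rw [if_pos (by omega)]
        rw [← e2, h1]
        congr 1
        exact Subtype.ext e1
      · have hi' : (i : ℕ) = m + 1 := by omega
        set u : Simplex (m+1) := ⟨smap (m+1) 1 t.1, smap_mono t.2.1, smap_mem t.2.2⟩ with hu
        have hnat := α.2.2 (m+1) 1 (by omega) (by omega) t u rfl
        have h1 := ih u ⟨m, by omega⟩
        have e1 : u.1 ⟨m, by omega⟩ = t.1 i := by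
          simp only [hu, smap]
          rw [if_neg (by omega)]
          exact congrArg t.1 (Fin.ext (a := i) (b := ⟨m+1, by omega⟩) hi').symm
        have e2 : ((α.1 (m+1)) u).1 ⟨m, by omega⟩ = ((α.1 (m+2)) t).1 i := by
          rw [hnat]
          simp only [smap]
          rw [if_neg (by omega)]
          exact congrArg ((α.1 (m+2)) t).1 (Fin.ext (a := i) (b := ⟨m+1, by omega⟩) hi').symm
        rw [← e2, h1]
        congr 1
        exact Subtype.ext e1

lemma psi_mem (α : TotDelta) (x : Set.Icc (-1:ℝ) 1) : psi α x ∈ Set.Icc (-1:ℝ) 1 :=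
  ((α.1 1) _).2.2 0

lemma psi_mono (α : TotDelta) : ∀ x y : Set.Icc (-1:ℝ) 1, x ≤ y → psi α x ≤ psi α y := by
  intro x y hxy
  set g : Fin 2 → ℝ := fun i => if (i : ℕ) = 0 then (x:ℝ) else (y:ℝ) with hg
  have hmono : Monotone g := by
    intro a b hab
    have h' : (a : ℕ) ≤ (b : ℕ) := hab
    simp only [hg]
    split_ifs with h1 h2
    · exact le_refl _
    · exact hxy
    · omega
    · exact le_refl _
  have hmem : ∀ i, g i ∈ Set.Icc (-1:ℝ) 1 := by
    intro i; simp only [hg]; split_ifs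
    · exact x.2
    · exact y.2
  set w : Simplex 2 := ⟨g, hmono, hmem⟩ with hw
  have h0 := coord_formula α 2 w 0
  have h1 := coord_formula α 2 w 1
  have hle : ((α.1 2) w).1 0 ≤ ((α.1 2) w).1 1 := ((α.1 2) w).2.1 (by simp [Fin.le_def])
  rw [h0, h1] at hle
  have e0 : w.1 (0 : Fin 2) = (x : ℝ) := by simp [hw, hg]
  have e1 : w.1 (1 : Fin 2) = (y : ℝ) := by simp [hw, hg]
  have hx : (⟨w.1 0, w.2.2 0⟩ : Set.Icc (-1:ℝ) 1) = x := Subtype.ext e0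
  have hy : (⟨w.1 1, w.2.2 1⟩ : Set.Icc (-1:ℝ) 1) = y := Subtype.ext e1
  rwa [hx, hy] at hle

lemma psi_continuous (α : TotDelta) : Continuous (psi α) := by
  have h1 : Continuous (fun x : Set.Icc (-1:ℝ) 1 =>
      (⟨fun _ => (x:ℝ), monotone_const, fun _ => x.2⟩ : Simplex 1)) := by
    apply Continuous.subtype_mk
    exact continuous_pi fun _ => continuous_subtype_val
  exact ((continuous_apply (0 : Fin 1)).comp continuous_subtype_val).comp
    ((α.1 1).continuous.comp h1)

lemma psi_bot (α : TotDelta) : psi α ⟨-1, by norm_num⟩ = -1 := by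
  set u : Simplex 0 := ⟨fun i => i.elim0, fun i => i.elim0, fun i => i.elim0⟩ with hu
  set v : Simplex 1 := ⟨fun _ => (-1 : ℝ), monotone_const, fun _ => by norm_num⟩ with hv
  have hveq : v.1 = dmap 0 0 u.1 := by
    funext j
    have : (j : ℕ) = 0 := by omega
    simp [hv, dmap, this]
  have hnat := α.2.1 0 0 (by omega) u v hveq
  show ((α.1 1) _).1 0 = -1
  have : (⟨fun _ => ((⟨-1, by norm_num⟩ : Set.Icc (-1:ℝ) 1) : ℝ), monotone_const,
      fun _ => (⟨-1, by norm_num⟩ : Set.Icc (-1:ℝ) 1).2⟩ : Simplex 1) = v := by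
    apply Subtype.ext; funext j; simp [hv]
  rw [this, hnat]
  simp [dmap]

lemma psi_top (α : TotDelta) : psi α ⟨1, by norm_num⟩ = 1 := by
  set u : Simplex 0 := ⟨fun i => i.elim0, fun i => i.elim0, fun i => i.elim0⟩ with hu
  set v : Simplex 1 := ⟨fun _ => (1 : ℝ), monotone_const, fun _ => by norm_num⟩ with hv
  have hveq : v.1 = dmap 0 1 u.1 := by
    funext j
    have : (j : ℕ) = 0 := by omega
    simp [hv, dmap, this]
  have hnat := α.2.1 0 1 (by omega) u v hveq
  show ((α.1 1) _).1 0 = 1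
  have : (⟨fun _ => ((⟨1, by norm_num⟩ : Set.Icc (-1:ℝ) 1) : ℝ), monotone_const,
      fun _ => (⟨1, by norm_num⟩ : Set.Icc (-1:ℝ) 1).2⟩ : Simplex 1) = v := by
    apply Subtype.ext; funext j; simp [hv]
  rw [this, hnat]
  simp [dmap]

/-- Every natural transformation `α : Δ^• → Δ^•` has the form
`α_k(t₁,…,t_k) = (φ(t₁),…,φ(t_k))` for a unique weakly monotone endpoint-preserving
`φ : [−1,1] → [−1,1]`; moreover `φ` is the degree-1 component `α₁` of `α`. -/
theorem totDelta_determined_by_degree_one (α : TotDelta) :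
    ∃! φ : MonI,
      (∀ (k : ℕ) (t : Simplex k) (i : Fin k),
        ((α.1 k) t).1 i = (φ.1 ⟨t.1 i, t.2.2 i⟩ : ℝ)) ∧
      (∀ x : Set.Icc (-1 : ℝ) 1,
        (φ.1 x : ℝ) =
          ((α.1 1) ⟨fun _ => (x : ℝ), monotone_const, fun _ => x.2⟩).1 0) := by
  refine ⟨⟨⟨fun x => ⟨psi α x, psi_mem α x⟩, (psi_continuous α).subtype_mk _⟩,
    fun x y hxy => psi_mono α x y hxy, Subtype.ext (psi_bot α), Subtype.ext (psi_top α)⟩,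
    ⟨fun k t i => coord_formula α k t i, fun x => rfl⟩, ?_⟩
  rintro ⟨φ', hmono, hb, ht⟩ ⟨h1, h2⟩
  apply Subtype.ext
  apply ContinuousMap.ext
  intro x
  apply Subtype.ext
  exact h2 x
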